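/- Let λ ⊢ n and let φ_{λ,b} : SYT(λ) → SYT(λ) be the recursively defined bijection. Then: (i) for b = 00⋯0, φ_b is the identity; (ii) for b = 11⋯1, φ_b(T) = ev(T); (iii) for b = 011⋯1, φ_b(T) = (ev(d(T)))^+; (iv) for b = 100⋯0, φ_b(T) = (ev(d(ev(T))))^+. -/

import Mathlib

/-!
Common combinatorial background: standard Young tableaux encoded as chains of
Young diagrams, the box-removal map `d`, box-addition `up`, the row statistic
`ε_k`, binary sequences (as functions `ℕ → Bool`), the generalised bijections
`phi` and partial orders `leB` of Definition 4.1, and interval parabolic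
subgroups of symmetric groups.
-/

open scoped BigOperators

/-- A standard Young tableau with `n` boxes, encoded as the chain of Young
diagrams `∅ = chain 0 ⊂ chain 1 ⊂ ⋯ ⊂ chain n`, where `chain k` is the shape
occupied by the entries `1, …, k`. -/
structure SYT (n : ℕ) where
  chain : ℕ → YoungDiagram
  chain_zero : chain 0 = ⊥
  chain_mono : ∀ k, chain k ≤ chain (k + 1)
  chain_card : ∀ k, k ≤ n → (chain k).card = k
  chain_stable : ∀ k, n ≤ k → chain k = chain n

namespace SYT

/-- The shape of a standard Young tableau. -/
def shape {n : ℕ} (T : SYT n) : YoungDiagram := T.chain n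

lemma chain_monotone {n : ℕ} (T : SYT n) : Monotone T.chain :=
  monotone_nat_of_le_succ T.chain_mono

/-- `ε_k(T)`: the (0-indexed) row of `T` containing the entry `k`. -/
noncomputable def row {n : ℕ} (T : SYT n) (k : ℕ) : ℕ :=
  sInf {i | ∃ j, (i, j) ∈ T.chain k ∧ (i, j) ∉ T.chain (k - 1)}

/-- `d(T)`: the tableau obtained from `T` by removing the box containing the
largest entry. -/
def d {n : ℕ} (T : SYT (n + 1)) : SYT n where
  chain k := T.chain (min k n)
  chain_zero := by simpa using T.chain_zero
  chain_mono k := T.chain_monotone (by omega)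
  chain_card k hk := by
    show (T.chain (min k n)).card = k
    rw [min_eq_left hk]; exact T.chain_card k (by omega)
  chain_stable k hk := by
    show T.chain (min k n) = T.chain (min n n)
    rw [min_eq_right hk, min_self]

/-- The one-row Young diagram with `m` cells. -/
def rowDiagram (m : ℕ) : YoungDiagram where
  cells := (Finset.range m).map ⟨fun j => (0, j), fun a b h => by simpa using h⟩
  isLowerSet := by
    rintro ⟨x1, x2⟩ ⟨y1, y2⟩ ⟨h1, h2⟩ hx
    simp only [Finset.coe_map, Function.Embedding.coeFn_mk, Set.mem_image,
      Finset.mem_coe, Finset.mem_range, Prod.mk.injEq] at hx ⊢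
    obtain ⟨j, hj, hj'⟩ := hx
    have hj'' : ((0 : ℕ), j) = (x1, x2) := hj'
    simp only [Prod.mk.injEq] at hj'' h1 h2
    obtain ⟨rfl, rfl⟩ := hj''
    exact ⟨y2, by omega, show ((0 : ℕ), y2) = (y1, y2) by rw [show y1 = 0 by omega]⟩

lemma rowDiagram_card (m : ℕ) : (rowDiagram m).card = m := by
  simp [rowDiagram, YoungDiagram.card]

lemma rowDiagram_mono {a b : ℕ} (h : a ≤ b) : rowDiagram a ≤ rowDiagram b := by
  intro x hx
  simp only [rowDiagram, YoungDiagram.mem_mk, Finset.mem_coe, Finset.mem_map,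
    Function.Embedding.coeFn_mk, Finset.mem_range, SetLike.mem_coe] at hx ⊢
  obtain ⟨j, hj, rfl⟩ := Finset.mem_map.1 hx
  exact Finset.mem_map.2 ⟨j, Finset.mem_range.2 (by simp at hj; omega), rfl⟩

lemma rowDiagram_zero : rowDiagram 0 = ⊥ := by
  ext x
  simp [rowDiagram, YoungDiagram.mem_mk]

/-- The one-row standard Young tableau with `n` boxes. -/
def rowSYT (n : ℕ) : SYT n where
  chain k := rowDiagram (min k n)
  chain_zero := by simpa using rowDiagram_zero
  chain_mono k := rowDiagram_mono (by omega)
  chain_card k hk := by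
    show (rowDiagram (min k n)).card = k
    rw [min_eq_left hk]; exact rowDiagram_card k
  chain_stable k hk := by
    show rowDiagram (min k n) = rowDiagram (min n n)
    rw [min_eq_right hk, min_self]

open Classical in
/-- `S⁺`: add a box containing the entry `n + 1` to `S` so that the resulting
tableau has shape `μ` (junk value if this is impossible). -/
noncomputable def up {n : ℕ} (S : SYT n) (μ : YoungDiagram) : SYT (n + 1) :=
  if h : S.shape ≤ μ ∧ μ.card = n + 1 then
    { chain := fun k => if k ≤ n then S.chain k else μ
      chain_zero := by simpa using S.chain_zero
      chain_mono := by
        intro k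
        show (if k ≤ n then S.chain k else μ) ≤ (if k + 1 ≤ n then S.chain (k + 1) else μ)
        rcases le_or_gt (k + 1) n with h2 | h2
        · rw [if_pos (by omega : k ≤ n), if_pos h2]
          exact S.chain_mono k
        · rw [if_neg (by omega : ¬ k + 1 ≤ n)]
          by_cases h1 : k ≤ n
          · rw [if_pos h1]
            have hkn : k = n := by omega
            subst hkn
            exact h.1
          · rw [if_neg h1]
      chain_card := by
        intro k hk
        show (if k ≤ n then S.chain k else μ).card = k
        by_cases h1 : k ≤ n
        · rw [if_pos h1]; exact S.chain_card k h1
        · rw [if_neg h1]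
          have : k = n + 1 := by omega
          rw [h.2, this]
      chain_stable := by
        intro k hk
        show (if k ≤ n then S.chain k else μ) = (if n + 1 ≤ n then S.chain (n + 1) else μ)
        rw [if_neg (by omega : ¬ k ≤ n), if_neg (by omega : ¬ n + 1 ≤ n)] }
  else rowSYT (n + 1)

end SYT

/-- Complementation of a binary sequence (`ol` in the paper, swapping `0` and `1`). -/
def olB (b : ℕ → Bool) : ℕ → Bool := fun i => !b i

/-- Truncation `b ↦ b_† = b₂b₃⋯` of a binary sequence. -/
def shiftB (b : ℕ → Bool) : ℕ → Bool := fun i => b (i + 1)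

/-- The generalised bijection `φ_{λ,b}` of Definition 4.1(1), defined (for an
arbitrary shape-preserving family of evacuation involutions `ev`) by
`φ_{λ,b}(T) = (φ_{μ,b_†}(d T))⁺` if `b₁ = 0` and
`φ_{λ,b}(T) = (φ_{μ,ol(b_†)}(d (ev T)))⁺` if `b₁ = 1`. -/
noncomputable def phiB (ev : ∀ m, SYT m → SYT m) : ∀ n : ℕ, (ℕ → Bool) → SYT n → SYT n
  | 0, _, T => T
  | n + 1, b, T =>
    if b 0 then (phiB ev n (olB (shiftB b)) ((ev (n + 1) T).d)).up T.shape
    else (phiB ev n (shiftB b) T.d).up T.shape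

/-- The generalised partial order `≤_{λ,b}` of Definition 4.1(2), defined
recursively (relative to a family of evacuation involutions `ev`). -/
noncomputable def leB (ev : ∀ m, SYT m → SYT m) : ∀ n : ℕ, (ℕ → Bool) → SYT n → SYT n → Prop
  | 0, _, _, _ => True
  | n + 1, b, S, T =>
    if b 0 then
      (ev (n + 1) S).row (n + 1) < (ev (n + 1) T).row (n + 1) ∨
        ((ev (n + 1) S).row (n + 1) = (ev (n + 1) T).row (n + 1) ∧
          leB ev n (olB (shiftB b)) ((ev (n + 1) S).d) ((ev (n + 1) T).d))
    else
      S.row (n + 1) < T.row (n + 1) ∨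
        (S.row (n + 1) = T.row (n + 1) ∧ leB ev n (shiftB b) S.d T.d)

/-- The strict order `<_{λ,b}`. -/
noncomputable def ltB (ev : ∀ m, SYT m → SYT m) (n : ℕ) (b : ℕ → Bool) (S T : SYT n) : Prop :=
  leB ev n b S T ∧ S ≠ T

/-- The standard parabolic subgroup `S_{[a,b]}` of `S_n` consisting of the
permutations fixing every point outside the (1-indexed) interval `[a,b]`. -/
def intervalSubgroup (n a b : ℕ) : Subgroup (Equiv.Perm (Fin n)) where
  carrier := {σ | ∀ i : Fin n, (i.val + 1 < a ∨ b < i.val + 1) → σ i = i}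
  one_mem' := fun _ _ => rfl
  mul_mem' := by
    intro σ τ hσ hτ i hi
    have : (σ * τ) i = σ (τ i) := rfl
    rw [this, hτ i hi, hσ i hi]
  inv_mem' := by
    intro σ hσ i hi
    conv_lhs => rw [← hσ i hi]
    exact σ.symm_apply_apply i

/-- The lower endpoints of the intervals in the multiplicity-free chain
labelled by a binary sequence `b` (0-indexed: `chainLo b (m-1)` is the lower
endpoint of the interval `I_m`); `b m = true` means the smallest element is
removed at the `m`-th step. -/
def chainLo (b : ℕ → Bool) : ℕ → ℕ
  | 0 => 1
  | m + 1 => chainLo b m + (if b m then 1 else 0)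

/-- The upper endpoints of the intervals in the multiplicity-free chain
labelled by a binary sequence `b`; `b m = false` means the largest element is
removed at the `m`-th step. -/
def chainHi (n : ℕ) (b : ℕ → Bool) : ℕ → ℕ
  | 0 => n
  | m + 1 => chainHi n b m - (if b m then 0 else 1)

/-!
Removing the box of the largest entry and adding it back so as to recover the original shape
is the identity, so `φ_{00⋯0}` is the identity by induction on `n`. For `b = 11⋯1` the first
step evacuates and then continues with `ol(b_†) = 00⋯0`, which returns `d(ev T)` unchanged; since
`ev` preserves the shape, adding the box back yields `ev T`. The sequences `011⋯1` and `100⋯0`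
reach `11⋯1` after one step of the recursion, so (iii) and (iv) follow from (ii).
-/

namespace SYT

theorem ext {n : ℕ} {S T : SYT n} (h : S.chain = T.chain) : S = T := by
  cases S; cases T; congr

instance : Subsingleton (SYT 0) where
  allEq S T := ext <| funext fun k => by
    rw [S.chain_stable k k.zero_le, T.chain_stable k k.zero_le, S.chain_zero, T.chain_zero]

theorem d_shape_le_shape {n : ℕ} (T : SYT (n + 1)) : T.d.shape ≤ T.shape := by
  simpa [shape, d] using T.chain_mono n

theorem up_d_shape {n : ℕ} (T : SYT (n + 1)) : T.d.up T.shape = T := by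
  rw [up, dif_pos ⟨T.d_shape_le_shape, T.chain_card (n + 1) le_rfl⟩]
  refine ext (funext fun k => ?_)
  by_cases hk : k ≤ n
  · simp [d, hk]
  · simp only [if_neg hk, shape]
    exact (T.chain_stable k (by omega)).symm

end SYT

section phiB

variable (ev : ∀ m, SYT m → SYT m) {n : ℕ} {b : ℕ → Bool}

theorem phiB_succ_of_false (hb : b 0 = false) (T : SYT (n + 1)) :
    phiB ev (n + 1) b T = (phiB ev n (shiftB b) T.d).up T.shape := by
  simp [phiB, hb]

theorem phiB_succ_of_true (hb : b 0 = true) (T : SYT (n + 1)) :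
    phiB ev (n + 1) b T = (phiB ev n (olB (shiftB b)) (ev (n + 1) T).d).up T.shape := by
  simp [phiB, hb]

theorem phiB_const_false : ∀ n (T : SYT n), phiB ev n (fun _ => false) T = T
  | 0, _ => rfl
  | n + 1, T => by
    have hshift : shiftB (fun _ => false) = fun _ => false := rfl
    rw [phiB_succ_of_false ev rfl, hshift, phiB_const_false n, T.up_d_shape]

theorem phiB_const_true (hev_shape : ∀ m (T : SYT m), (ev m T).shape = T.shape) :
    ∀ n (T : SYT n), phiB ev n (fun _ => true) T = ev n T
  | 0, _ => Subsingleton.elim _ _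
  | n + 1, T => by
    have hol : olB (shiftB fun _ => true) = fun _ => false := rfl
    rw [phiB_succ_of_true ev rfl, hol, phiB_const_false, ← hev_shape (n + 1) T, SYT.up_d_shape]

end phiB

theorem phi_special_cases_general
    (n : ℕ) (lam : YoungDiagram)
    (ev : ∀ m, SYT m → SYT m)
    (hev_shape : ∀ m (T : SYT m), (ev m T).shape = T.shape) :
    (∀ T : SYT (n + 1), T.shape = lam →
      phiB ev (n + 1) (fun _ => false) T = T) ∧
    (∀ T : SYT (n + 1), T.shape = lam →
      phiB ev (n + 1) (fun _ => true) T = ev (n + 1) T) ∧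
    (∀ T : SYT (n + 1), T.shape = lam →
      phiB ev (n + 1) (fun i => decide (i ≠ 0)) T = (ev n T.d).up T.shape) ∧
    (∀ T : SYT (n + 1), T.shape = lam →
      phiB ev (n + 1) (fun i => decide (i = 0)) T = (ev n (ev (n + 1) T).d).up T.shape) := by
  refine ⟨fun T _ => phiB_const_false ev _ T, fun T _ => phiB_const_true ev hev_shape _ T,
    fun T _ => ?_, fun T _ => ?_⟩
  · have hshift : shiftB (fun i => decide (i ≠ 0)) = fun _ => true := by
      funext i; simp [shiftB]
    rw [phiB_succ_of_false ev rfl, hshift, phiB_const_true ev hev_shape]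
  · have hshift : olB (shiftB fun i => decide (i = 0)) = fun _ => true := by
      funext i; simp [shiftB, olB]
    rw [phiB_succ_of_true ev rfl, hshift, phiB_const_true ev hev_shape]

theorem phi_special_cases
    (n : ℕ) (lam : YoungDiagram) (hlam : lam.card = n + 1)
    (ev : ∀ m, SYT m → SYT m)
    (hev_shape : ∀ m (T : SYT m), (ev m T).shape = T.shape)
    (hev_invol : ∀ m, Function.Involutive (ev m)) :
    (∀ T : SYT (n + 1), T.shape = lam →
      phiB ev (n + 1) (fun _ => false) T = T) ∧
    (∀ T : SYT (n + 1), T.shape = lam →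
      phiB ev (n + 1) (fun _ => true) T = ev (n + 1) T) ∧
    (∀ T : SYT (n + 1), T.shape = lam →
      phiB ev (n + 1) (fun i => decide (i ≠ 0)) T = (ev n T.d).up T.shape) ∧
    (∀ T : SYT (n + 1), T.shape = lam →
      phiB ev (n + 1) (fun i => decide (i = 0)) T = (ev n (ev (n + 1) T).d).up T.shape) :=
  phi_special_cases_general n lam ev hev_shape
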